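/- For any integer n ≥ 2, Σ_{k=1}^{n−1} 1/(1 − cos(2πk/n)) = (n² − 1)/6. -/

import Mathlib

/-!
The weights `j * (n - j)` have constant second difference `-2`, so for a root of unity `z ≠ 1`
with `z ^ n = 1` one gets `(z - 1) ^ 2 * ∑_{j<n} j (n - j) z ^ j = 2 n z`. At `z = exp (θ i)`,
where `(z - 1) ^ 2 = 2 (cos θ - 1) z`, the real part of this is the finite Fourier expansion
`1 / (1 - cos θ) = -(1/n) ∑_{j<n} j (n - j) cos (j θ)` for `θ = 2πk/n`, `0 < k < n`. Summing over
`k` and exchanging the sums, each inner sum `∑_{k=1}^{n-1} cos (2πjk/n)` with `0 < j < n` is `-1`,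
leaving `(1/n) ∑_{j<n} j (n - j) = (n ^ 2 - 1) / 6`.
-/

open Finset

section CommRing

variable {R : Type*} [CommRing R]

theorem sum_range_natCast_mul_pow_mul_sub_one (z : R) (n : ℕ) :
    (∑ j ∈ range n, (j : R) * z ^ j) * (z - 1) = (n - 1) * z ^ n + 1 - ∑ j ∈ range n, z ^ j := by
  induction n with
  | zero => simp
  | succ n ih =>
    rw [sum_range_succ, sum_range_succ (z ^ ·), add_mul, ih]
    push_cast
    ring

theorem sum_range_natCast_sq_mul_pow_mul_sub_one (z : R) (n : ℕ) :
    (∑ j ∈ range n, (j : R) ^ 2 * z ^ j) * (z - 1) =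
      (n - 1) ^ 2 * z ^ n - 1 + ∑ j ∈ range n, z ^ j - 2 * ∑ j ∈ range n, (j : R) * z ^ j := by
  induction n with
  | zero => simp
  | succ n ih =>
    rw [sum_range_succ, sum_range_succ (z ^ ·), sum_range_succ (fun j => (j : R) * z ^ j),
      add_mul, ih]
    push_cast
    ring

theorem sum_range_mul_sub (a : R) (n : ℕ) :
    6 * ∑ j ∈ range n, (j : R) * (a - j) = 3 * a * n * (n - 1) - n * (n - 1) * (2 * n - 1) := by
  induction n with
  | zero => simp
  | succ n ih =>
    rw [sum_range_succ, mul_add, ih]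
    push_cast
    ring

variable [IsDomain R] {z : R} {n : ℕ}

theorem geom_sum_eq_zero_of_pow_eq_one (hz : z ^ n = 1) (hz1 : z ≠ 1) :
    ∑ j ∈ range n, z ^ j = 0 := by
  have := geom_sum_mul z n
  rwa [hz, sub_self, mul_eq_zero, or_iff_left (sub_ne_zero.mpr hz1)] at this

theorem sum_range_mul_sub_mul_pow_mul_sub_one_sq (hz : z ^ n = 1) (hz1 : z ≠ 1) :
    (∑ j ∈ range n, (j : R) * (n - j) * z ^ j) * (z - 1) ^ 2 = 2 * n * z := by
  have hG := geom_sum_eq_zero_of_pow_eq_one hz hz1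
  have hA := sum_range_natCast_mul_pow_mul_sub_one z n
  have hB := sum_range_natCast_sq_mul_pow_mul_sub_one z n
  rw [hz, hG] at hA hB
  have hS : ∑ j ∈ range n, (j : R) * (n - j) * z ^ j =
      n * ∑ j ∈ range n, (j : R) * z ^ j - ∑ j ∈ range n, (j : R) ^ 2 * z ^ j := by
    rw [mul_sum, ← sum_sub_distrib]
    exact sum_congr rfl fun j _ => by ring
  rw [hS]
  linear_combination ((n : R) * (z - 1) + 2) * hA - (z - 1) * hB

end CommRing

namespace Complex

theorem exp_ofReal_mul_I_eq_one_iff (θ : ℝ) : exp (θ * I) = 1 ↔ Real.cos θ = 1 := by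
  refine ⟨fun h => by simpa [h] using (exp_ofReal_mul_I_re θ).symm, fun h => ?_⟩
  have hsin : Real.sin θ = 0 := by nlinarith [Real.sin_sq_add_cos_sq θ]
  apply Complex.ext <;> simp [exp_ofReal_mul_I_re, exp_ofReal_mul_I_im, h, hsin]

theorem exp_ofReal_mul_I_pow (θ : ℝ) (k : ℕ) : exp (θ * I) ^ k = exp ((k * θ : ℝ) * I) := by
  rw [← exp_nat_mul]
  push_cast
  ring_nf

theorem re_exp_ofReal_mul_I_pow (θ : ℝ) (k : ℕ) : (exp (θ * I) ^ k).re = Real.cos (k * θ) := by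
  rw [exp_ofReal_mul_I_pow, exp_ofReal_mul_I_re]

end Complex

open Complex in
theorem sub_one_sq_exp_ofReal_mul_I (θ : ℝ) :
    (exp (θ * I) - 1) ^ 2 = 2 * (Real.cos θ - 1) * exp (θ * I) := by
  have hinv : exp (θ * I) * exp (-θ * I) = 1 := by rw [← exp_add]; simp
  have hcos : 2 * (Real.cos θ : ℂ) = exp (θ * I) + exp (-θ * I) := by rw [ofReal_cos, two_cos]
  linear_combination (-exp (θ * I)) * hcos - hinv

section Trigonometric

variable {n : ℕ} {θ : ℝ}

open Complex in
theorem exp_ofReal_mul_I_pow_eq_one (hnθ : Real.cos (n * θ) = 1) : exp (θ * I) ^ n = 1 := by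
  rwa [exp_ofReal_mul_I_pow, exp_ofReal_mul_I_eq_one_iff]

theorem sum_range_cos_nat_mul (hnθ : Real.cos (n * θ) = 1) (hθ : Real.cos θ ≠ 1) :
    ∑ k ∈ range n, Real.cos (k * θ) = 0 := by
  have hG := geom_sum_eq_zero_of_pow_eq_one (exp_ofReal_mul_I_pow_eq_one hnθ)
    (mt (Complex.exp_ofReal_mul_I_eq_one_iff θ).mp hθ)
  simpa only [Complex.re_sum, Complex.re_exp_ofReal_mul_I_pow, Complex.zero_re] using
    congrArg Complex.re hG

open Complex in
theorem sum_range_mul_sub_mul_cos_nat_mul (hnθ : Real.cos (n * θ) = 1) (hθ : Real.cos θ ≠ 1) :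
    ∑ j ∈ range n, (j : ℝ) * (n - j) * Real.cos (j * θ) = n / (Real.cos θ - 1) := by
  have hkey := sum_range_mul_sub_mul_pow_mul_sub_one_sq (exp_ofReal_mul_I_pow_eq_one hnθ)
    (mt (exp_ofReal_mul_I_eq_one_iff θ).mp hθ)
  rw [sub_one_sq_exp_ofReal_mul_I, ← mul_assoc, mul_comm (2 : ℂ) n] at hkey
  have hc : (Real.cos θ : ℂ) - 1 ≠ 0 := sub_ne_zero.mpr (mod_cast hθ)
  have hS : ∑ j ∈ range n, (j : ℂ) * (n - j) * exp (θ * I) ^ j =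
      ((n / (Real.cos θ - 1) : ℝ) : ℂ) := by
    rw [ofReal_div, ofReal_natCast, ofReal_sub, ofReal_one, eq_div_iff hc]
    linear_combination mul_right_cancel₀ (exp_ne_zero _) hkey / 2
  simpa only [re_sum, ← ofReal_natCast, ← ofReal_sub, ← ofReal_mul, re_ofReal_mul,
    re_exp_ofReal_mul_I_pow, ofReal_re] using congrArg re hS

end Trigonometric

open Real

theorem sum_Ico_one_cos_nat_mul {n : ℕ} {θ : ℝ} (hn : n ≠ 0) (hnθ : cos (n * θ) = 1)
    (hθ : cos θ ≠ 1) : ∑ k ∈ Ico 1 n, cos (k * θ) = -1 := by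
  rw [sum_Ico_eq_sub _ (Nat.one_le_iff_ne_zero.mpr hn), sum_range_cos_nat_mul hnθ hθ]
  simp

theorem cos_nat_mul_two_pi_mul_div {n : ℕ} (hn : n ≠ 0) (k : ℕ) :
    cos (n * (2 * π * k / n)) = 1 := by
  rw [← cos_nat_mul_two_pi k]
  congr 1
  field_simp

theorem cos_two_pi_mul_div_ne_one {n k : ℕ} (hk : 0 < k) (hkn : k < n) :
    cos (2 * π * k / n) ≠ 1 := by
  have hn : (0 : ℝ) < n := by exact_mod_cast hk.trans hkn
  have hpos : 0 < 2 * π * k / n := by positivity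
  have hlt : 2 * π * k / n < 2 * π := by
    rw [div_lt_iff₀ hn]
    gcongr
  rw [Ne, cos_eq_one_iff_of_lt_of_lt (by linarith) hlt]
  exact hpos.ne'

theorem one_div_one_sub_cos_two_pi_mul_div {n k : ℕ} (hk : 0 < k) (hkn : k < n) :
    1 / (1 - cos (2 * π * k / n)) =
      -(∑ j ∈ range n, (j : ℝ) * (n - j) * cos (j * (2 * π * k / n))) / n := by
  have hn0 : n ≠ 0 := by omega
  rw [sum_range_mul_sub_mul_cos_nat_mul (cos_nat_mul_two_pi_mul_div hn0 k)
    (cos_two_pi_mul_div_ne_one hk hkn), neg_div,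
    div_div_cancel_left' (Nat.cast_ne_zero.mpr hn0), ← one_div, ← div_neg, neg_sub]

theorem stmt_7 (n : ℕ) (hn : 2 ≤ n) :
    ∑ k ∈ Finset.Ico 1 n, (1 : ℝ) / (1 - Real.cos (2 * Real.pi * k / n)) =
      ((n : ℝ) ^ 2 - 1) / 6 := by
  have hn0 : n ≠ 0 := by omega
  calc ∑ k ∈ Ico 1 n, (1 : ℝ) / (1 - cos (2 * π * k / n))
      = ∑ k ∈ Ico 1 n, -(∑ j ∈ range n, (j : ℝ) * (n - j) * cos (j * (2 * π * k / n))) / n := by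
        exact sum_congr rfl fun k hk =>
          one_div_one_sub_cos_two_pi_mul_div (mem_Ico.mp hk).1 (mem_Ico.mp hk).2
    _ = -(∑ j ∈ range n, (j : ℝ) * (n - j) * ∑ k ∈ Ico 1 n, cos (k * (2 * π * j / n))) / n := by
        rw [← sum_div, sum_neg_distrib, sum_comm]
        simp_rw [mul_sum]
        congr! 6
        ring
    _ = (∑ j ∈ range n, (j : ℝ) * (n - j)) / n := by
        rw [← sum_neg_distrib]
        congr 1
        refine sum_congr rfl fun j hj => ?_
        rcases Nat.eq_zero_or_pos j with rfl | hj0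
        · simp
        rw [sum_Ico_one_cos_nat_mul hn0 (cos_nat_mul_two_pi_mul_div hn0 j)
          (cos_two_pi_mul_div_ne_one hj0 (mem_range.mp hj))]
        ring
    _ = ((n : ℝ) ^ 2 - 1) / 6 := by
        have := sum_range_mul_sub (n : ℝ) n
        field_simp
        linear_combination this
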